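/- arXiv:1511.05088 — 2 statements merged into one kernel-verified Lean document; each statement's English description precedes it below -/
import Mathlib

section
/- (Burns–Hale theorem) A group G is left-orderable if and only if for every finitely generated subgroup H ≠ {1} of G there exist a left-orderable group L and a nontrivial group homomorphism H → L. -/
/-!
A left order is the same as a positive cone: a subsemigroup `P` with `1 ∉ P` and `g ∈ P` or
`g⁻¹ ∈ P` for every `g ≠ 1`. By compactness of `G → Bool` it therefore suffices to choose, for
every finite `S ⊆ G \ {1}`, signs `g ↦ g^{±1}` on `S` such that the signed elements do not
generate `1` as a semigroup. This goes by induction on `|S|`: a nontrivial map `f` from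
`⟨S⟩` to a left-ordered group kills a proper subset `S₁ ⊆ S`; the signs on `S₁` come from the
induction hypothesis, the others are chosen to make `f` positive, and a product of signed
elements equal to `1` would have `f`-image `1`, forcing all its factors into `S₁`.
-/

universe u

def LeftOrderable (G : Type*) [Group G] : Prop :=
  ∃ r : G → G → Prop, IsStrictTotalOrder G r ∧ ∀ f g h : G, r g h → r (f * g) (f * h)

open Subsemigroup

section PositiveCone

variable {G : Type*} [Group G]

def IsPositiveCone (P : Subsemigroup G) : Prop :=
  (1 : G) ∉ P ∧ ∀ g : G, g ≠ 1 → g ∈ P ∨ g⁻¹ ∈ P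

theorem leftOrderable_iff_exists_isPositiveCone :
    LeftOrderable G ↔ ∃ P : Subsemigroup G, IsPositiveCone P := by
  constructor
  · rintro ⟨r, hr, hmul⟩
    refine ⟨⟨{g | r 1 g}, fun {a b} ha hb => hr.trans _ _ _ ha ?_⟩, hr.irrefl 1, fun g hg => ?_⟩
    · simpa using hmul a 1 b hb
    · by_contra! h
      exact hg (hr.trichotomous 1 g h.1 fun hg1 => h.2 (by simpa using hmul g⁻¹ g 1 hg1)).symm
  · rintro ⟨P, hP1, hPtot⟩
    refine ⟨fun a b => a⁻¹ * b ∈ P, { trichotomous := ?_, irrefl := ?_, trans := ?_ }, ?_⟩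
    · intro a b hab hba
      by_contra hne
      rcases hPtot (a⁻¹ * b) (by rwa [ne_eq, inv_mul_eq_one]) with h | h
      · exact hab h
      · exact hba (by simpa using h)
    · intro a ha
      exact hP1 (by simpa using ha)
    · intro a b c hab hbc
      simpa [mul_assoc] using mul_mem hab hbc
    · intro f g h hgh
      simpa [mul_assoc] using hgh

end PositiveCone

section Closure

variable {M N : Type*}

theorem Subsemigroup.exists_finset_of_mem_closure [Mul M] {s : Set M} {x : M}
    (hx : x ∈ closure s) : ∃ t : Finset M, ↑t ⊆ s ∧ x ∈ closure (t : Set M) := by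
  classical
  induction hx using closure_induction with
  | mem x hx => exact ⟨{x}, by simpa using hx, subset_closure (by simp)⟩
  | mul x y _ _ hx hy =>
    obtain ⟨t₁, ht₁, hx⟩ := hx
    obtain ⟨t₂, ht₂, hy⟩ := hy
    refine ⟨t₁ ∪ t₂, by simp [ht₁, ht₂], mul_mem ?_ ?_⟩
    · exact closure_mono (by simp) hx
    · exact closure_mono (by simp) hy

theorem MonoidHom.one_mem_closure_image_iff [Monoid M] [Monoid N] {f : M →* N}
    (hf : Function.Injective f) {s : Set M} :
    (1 : N) ∈ closure (f '' s) ↔ (1 : M) ∈ closure s := by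
  change 1 ∈ closure ((f : M →ₙ* N) '' s) ↔ _
  rw [← MulHom.map_mclosure, mem_map]
  refine ⟨fun ⟨x, hx, hx1⟩ => ?_, fun h => ⟨1, h, map_one f⟩⟩
  rwa [hf (hx1.trans (map_one f).symm)] at hx

theorem one_notMem_closure_of_monoidHom [Monoid M] [Monoid N] (f : M →* N)
    {P : Subsemigroup N} (hP : (1 : N) ∉ P) {A B : Set M} (hB : (1 : M) ∉ closure B)
    (hA : ∀ a ∈ A, f a ∈ P ∨ f a = 1 ∧ a ∈ B) : (1 : M) ∉ closure A := by
  suffices h : ∀ x ∈ closure A, f x ∈ P ∨ f x = 1 ∧ x ∈ closure B by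
    simpa [hP, hB] using h 1
  intro x hx
  induction hx using closure_induction with
  | mem a ha => exact (hA a ha).imp_right fun h => ⟨h.1, subset_closure h.2⟩
  | mul x y _ _ hx hy =>
    rw [map_mul]
    rcases hx with hx | ⟨hx1, hxB⟩ <;> rcases hy with hy | ⟨hy1, hyB⟩
    · exact .inl (mul_mem hx hy)
    · exact .inl (by rwa [hy1, mul_one])
    · exact .inl (by rwa [hx1, one_mul])
    · exact .inr ⟨by rw [hx1, hy1, mul_one], mul_mem hxB hyB⟩

end Closure

theorem isClosed_of_eqOn_finset {α β : Type*} [TopologicalSpace β] [DiscreteTopology β]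
    (S : Finset α) {t : Set (α → β)} (ht : ∀ ε ε', Set.EqOn ε ε' S → ε ∈ t → ε' ∈ t) :
    IsClosed t := by
  have : t = S.restrict ⁻¹' (S.restrict '' t) := by
    refine (Set.subset_preimage_image _ _).antisymm fun ε ⟨δ, hδ, hδε⟩ => ht δ ε ?_ hδ
    intro a ha
    exact congrFun hδε ⟨a, ha⟩
  rw [this]
  exact (isClosed_discrete _).preimage S.continuous_restrict

section Signs

variable {G : Type*} [Group G]

def signed (ε : G → Bool) (g : G) : G :=
  bif ε g then g else g⁻¹

theorem signed_eq_or_eq_inv (ε : G → Bool) (g : G) : signed ε g = g ∨ signed ε g = g⁻¹ := by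
  cases h : ε g <;> simp [signed, h]

theorem signed_mem {H : Subgroup G} (ε : G → Bool) {g : G} (hg : g ∈ H) : signed ε g ∈ H := by
  rcases signed_eq_or_eq_inv ε g with h | h <;> rw [h]
  exacts [hg, H.inv_mem hg]

theorem exists_one_notMem_closure_signed_finset
    (hloc : ∀ H : Subgroup G, H.FG → H ≠ ⊥ →
      ∃ (L : Type u) (_ : Group L), LeftOrderable L ∧ ∃ f : H →* L, ∃ h : H, f h ≠ 1)
    (S : Finset G) (hS : (1 : G) ∉ S) : ∃ ε : G → Bool, (1 : G) ∉ closure (signed ε '' S) := by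
  classical
  induction S using Finset.strongInduction with | H S ih =>
  rcases S.eq_empty_or_nonempty with rfl | ⟨s₀, hs₀⟩
  · exact ⟨fun _ => true, by simpa using notMem_bot⟩
  set H := Subgroup.closure (S : Set G)
  have hH : H ≠ ⊥ := (Subgroup.ne_bot_iff_exists_ne_one).2
    ⟨⟨s₀, Subgroup.subset_closure hs₀⟩, fun h => hS ((H.mk_eq_one.1 h) ▸ hs₀)⟩
  obtain ⟨L, _, hL, f, y, hfy⟩ := hloc H ⟨S, rfl⟩ hH
  obtain ⟨P, hP1, hPtot⟩ := leftOrderable_iff_exists_isPositiveCone.1 hL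
  let S₁ := S.filter fun s => ∀ hs : s ∈ H, f ⟨s, hs⟩ = 1
  have hS₁ : S₁ ⊂ S := by
    refine (Finset.filter_subset _ S).ssubset_of_ne fun hS₁ => hfy ?_
    have hker : (⊤ : Subgroup H) ≤ f.ker := by
      rw [← Subgroup.closure_preimage_eq_top, Subgroup.closure_le]
      rintro ⟨s, hsH⟩ hs
      have hsS : s ∈ S := by simpa using hs
      rw [← hS₁] at hsS
      exact (Finset.mem_filter.1 hsS).2 hsH
    exact hker (Subgroup.mem_top y)
  obtain ⟨ε₁, hε₁⟩ := ih S₁ hS₁ fun h => hS (hS₁.subset h)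
  let ε : G → Bool := fun g =>
    if hg : g ∈ H then (if f ⟨g, hg⟩ = 1 then ε₁ g else decide (f ⟨g, hg⟩ ∈ P)) else true
  refine ⟨ε, fun h1 => ?_⟩
  have hsignedH : signed ε '' S ⊆ Set.range H.subtype := by
    rw [H.coe_subtype, Subtype.range_coe]
    rintro _ ⟨s, hs, rfl⟩
    exact signed_mem ε (Subgroup.subset_closure hs)
  rw [← Set.image_preimage_eq_of_subset hsignedH,
    MonoidHom.one_mem_closure_image_iff H.subtype_injective] at h1
  refine one_notMem_closure_of_monoidHom f hP1 (B := H.subtype ⁻¹' (signed ε₁ '' S₁)) ?_ ?_ h1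
  · rw [← MonoidHom.one_mem_closure_image_iff H.subtype_injective]
    exact fun h => hε₁ (closure_mono (Set.image_preimage_subset _ _) h)
  · rintro a ⟨s, hs, ha⟩
    set x : H := ⟨s, Subgroup.subset_closure hs⟩
    have hfa : f a = bif ε s then f x else (f x)⁻¹ := by
      have hax : (a : G) = bif ε s then (x : G) else (x : G)⁻¹ := ha.symm
      generalize ε s = b at hax ⊢
      cases b
      · rw [show a = x⁻¹ from Subtype.ext hax, map_inv]; rfl
      · rw [show a = x from Subtype.ext hax]; rfl
    have hεs : ε s = if f x = 1 then ε₁ s else decide (f x ∈ P) := dif_pos x.2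
    by_cases hx : f x = 1
    · refine .inr ⟨by cases ε s <;> simp [hfa, hx], s, Finset.mem_filter.2 ⟨hs, fun _ => hx⟩, ?_⟩
      simp [← ha, signed, hεs, hx]
    · left
      by_cases hxP : f x ∈ P
      · simp [hfa, hεs, hx, hxP]
      · simpa [hfa, hεs, hx, hxP] using (hPtot _ hx).resolve_left hxP

theorem exists_one_notMem_closure_signed
    (h : ∀ S : Finset G, (1 : G) ∉ S → ∃ ε : G → Bool, (1 : G) ∉ closure (signed ε '' S)) :
    ∃ ε : G → Bool, (1 : G) ∉ closure (signed ε '' {g | g ≠ 1}) := by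
  classical
  let t : Finset G → Set (G → Bool) := fun S =>
    {ε | (1 : G) ∉ closure (signed ε '' ↑(S.erase 1))}
  have ht_anti : Antitone t := fun S T hST ε hε h1 =>
    hε (closure_mono (Set.image_mono (Finset.coe_subset.2 (Finset.erase_subset_erase 1 hST))) h1)
  have ht_closed : ∀ S, IsClosed (t S) := fun S =>
    isClosed_of_eqOn_finset S fun ε ε' hεε' hε => by
      rwa [Set.mem_ofPred_eq, ← Set.image_congr fun g hg => ?_]
      simp [signed, hεε' (Finset.mem_of_mem_erase hg)]
  obtain ⟨ε, hε⟩ := IsCompact.nonempty_iInter_of_directed_nonempty_isCompact_isClosed t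
    ht_anti.directed_ge (fun S => h _ (S.notMem_erase 1))
    (fun S => (ht_closed S).isCompact) ht_closed
  refine ⟨ε, fun h1 => ?_⟩
  obtain ⟨T, hT, h1T⟩ := exists_finset_of_mem_closure h1
  obtain ⟨S, hS, rfl⟩ := Finset.subset_set_image_iff.1 hT
  have hS1 : S.erase 1 = S := Finset.erase_eq_of_notMem fun h => hS h rfl
  exact Set.mem_iInter.1 hε S (by simpa [hS1] using h1T)

end Signs

/-- Burns–Hale: a group `G` is left-orderable iff every nontrivial
finitely generated subgroup of `G` admits a nontrivial homomorphism to some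
left-orderable group. -/
theorem burns_hale {G : Type u} [Group G] :
    LeftOrderable G ↔
      ∀ H : Subgroup G, H.FG → H ≠ ⊥ →
        ∃ (L : Type u) (_ : Group L), LeftOrderable L ∧
          ∃ f : H →* L, ∃ h : H, f h ≠ 1 := by
  constructor
  · rintro hG H - hH
    obtain ⟨a, ha⟩ := H.ne_bot_iff_exists_ne_one.1 hH
    exact ⟨G, _, hG, H.subtype, a, by simpa using ha⟩
  · intro hloc
    obtain ⟨ε, hε⟩ :=
      exists_one_notMem_closure_signed (exists_one_notMem_closure_signed_finset hloc)
    refine leftOrderable_iff_exists_isPositiveCone.2 ⟨_, hε, fun g hg => ?_⟩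
    have hmem : signed ε g ∈ closure (signed ε '' {g | g ≠ 1}) := subset_closure ⟨g, hg, rfl⟩
    rcases signed_eq_or_eq_inv ε g with h | h <;> rw [h] at hmem
    exacts [.inl hmem, .inr hmem]
end

section
/- (Brodskii; Rhemtulla–Rolfsen; Navas) A group G admits a Conradian left-ordering if and only if G is locally indicable. Here a Conradian left-ordering is a left-invariant strict linear order < on G such that for all g, h ∈ G with 1 < g and 1 < h there exists a positive integer n with g < h·gⁿ. -/
/-!
A Conradian order satisfies Conrad's condition already with `n = 2`: `a < b * a ^ 2` for all
positive `a`, `b`. Consequently, if `x ≤ a`, `y ≤ a` and `1 < a` then `x * y < a ^ 3`, so the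
elements bounded in absolute value by powers of a positive `a` form a convex subgroup.

In a finitely generated group `H`, let `f` dominate the generators. Convex subgroups form a
chain, so the union `C` of those avoiding `f` is a proper convex subgroup, and every positive
`w ∉ C` has powers exceeding everything (otherwise the convex subgroup bounded by powers of `w`
would avoid `f`). Bounding conjugates `s * x * s⁻¹` by `a ^ 9` shows that `C` is normal and that
conjugation preserves positivity outside `C`, so `H ⧸ C` is a bi-ordered archimedean group. By
Hölder's argument it is abelian; being finitely generated, torsion-free and nontrivial, it maps
onto `ℤ`.

Conversely, for every finite `F ⊆ G` local indicability lets one choose one of `g`, `g⁻¹` for each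
`g ∈ F ∖ {1}` so that `1` is not in the closure of the chosen elements under `(a, b) ↦ a * b` and
`(a, b) ↦ a⁻¹ * b * a ^ 2`: map `⟨F⟩` onto `ℤ`, choose the elements of positive image and recurse
on the elements of `F` in the kernel. A limit of these choices along an ultrafilter is a positive
cone closed under both operations, that is, a Conradian left order.
-/

/-- A group is locally indicable if every nontrivial finitely generated subgroup
admits a surjective homomorphism onto the integers. -/
def LocallyIndicable (G : Type*) [Group G] : Prop :=
  ∀ H : Subgroup G, H.FG → H ≠ ⊥ →
    ∃ φ : H →* Multiplicative ℤ, Function.Surjective φ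

open Function Set

section PositiveCone

variable {G : Type*} [Group G]

structure IsPositiveCone_s16 (P : Set G) : Prop where
  one_notMem : (1 : G) ∉ P
  mul_mem {a b : G} : a ∈ P → b ∈ P → a * b ∈ P
  mem_or_inv_mem {a : G} : a ≠ 1 → a ∈ P ∨ a⁻¹ ∈ P

namespace IsPositiveCone_s16

variable {P : Set G} (hP : IsPositiveCone_s16 P)
include hP

theorem isStrictTotalOrder : IsStrictTotalOrder G (fun a b => a⁻¹ * b ∈ P) where
  trichotomous a b hab hba := by
    by_contra hne
    rcases hP.mem_or_inv_mem (a := a⁻¹ * b) (by rwa [Ne, inv_mul_eq_one]) with h | h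
    · exact hab h
    · exact hba (by simpa using h)
  irrefl a := by simpa using hP.one_notMem
  trans a b c hab hbc := by simpa [mul_assoc] using hP.mul_mem hab hbc

noncomputable abbrev linearOrder : LinearOrder G :=
  @linearOrderOfSTO G _ hP.isStrictTotalOrder (Classical.decRel _)

theorem lt_iff {a b : G} : letI := hP.linearOrder; a < b ↔ a⁻¹ * b ∈ P := Iff.rfl

theorem one_lt_iff {a : G} : letI := hP.linearOrder; 1 < a ↔ a ∈ P := by
  rw [hP.lt_iff, inv_one, one_mul]

theorem mulLeftMono : letI := hP.linearOrder; MulLeftMono G := by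
  let := hP.linearOrder
  have : MulLeftStrictMono G := ⟨fun c a b (h : a⁻¹ * b ∈ P) => by
    rw [hP.lt_iff]
    simpa [mul_assoc] using h⟩
  exact mulLeftMono_of_mulLeftStrictMono G

theorem mulRightMono (hconj : ∀ a ∈ P, ∀ s, s * a * s⁻¹ ∈ P) :
    letI := hP.linearOrder; MulRightMono G := by
  let := hP.linearOrder
  have : MulRightStrictMono G := ⟨fun c a b (h : a⁻¹ * b ∈ P) => by
    rw [hP.lt_iff]
    simpa [mul_assoc] using hconj _ h c⁻¹⟩
  exact mulRightMono_of_mulRightStrictMono G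

end IsPositiveCone_s16

end PositiveCone

theorem exists_pow_le_lt_pow_succ {M : Type*} [Monoid M] [LinearOrder M] {δ a : M} (ha : 1 ≤ a)
    (h : ∃ n : ℕ, a < δ ^ n) : ∃ k : ℕ, δ ^ k ≤ a ∧ a < δ ^ (k + 1) := by
  classical
  have hpos : Nat.find h ≠ 0 := fun h0 => by
    simpa [h0, ha.not_gt] using Nat.find_spec h
  refine ⟨Nat.find h - 1, not_lt.1 (Nat.find_min h (by omega)), ?_⟩
  rw [Nat.sub_add_cancel (Nat.pos_of_ne_zero hpos)]
  exact Nat.find_spec h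

section Holder

variable {G : Type*} [Group G] [LinearOrder G] [MulLeftMono G]

theorem one_lt_or_eq_one_or_one_lt_inv (a : G) : 1 < a ∨ a = 1 ∨ 1 < a⁻¹ := by
  rw [Left.one_lt_inv_iff]
  exact lt_trichotomy 1 a |>.imp_right (Or.imp Eq.symm id)

theorem commute_of_forall_one_lt (h : ∀ a b : G, 1 < a → 1 < b → Commute a b) (a b : G) :
    Commute a b := by
  have hpos : ∀ a : G, 1 < a → Commute a b := fun a ha => by
    rcases one_lt_or_eq_one_or_one_lt_inv b with hb | rfl | hb
    · exact h a b ha hb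
    · exact Commute.one_right a
    · simpa using (h a b⁻¹ ha hb).inv_right
  rcases one_lt_or_eq_one_or_one_lt_inv a with ha | rfl | ha
  · exact hpos a ha
  · exact Commute.one_left b
  · simpa using (hpos a⁻¹ ha).inv_left

theorem exists_mul_self_le [MulRightMono G] {ε δ : G} (hδ : 1 < δ) (hδε : δ < ε) :
    ∃ η, 1 < η ∧ η * η ≤ ε := by
  by_cases hsq : δ * δ ≤ ε
  · exact ⟨δ, hδ, hsq⟩
  · refine ⟨δ⁻¹ * ε, by simpa using hδε, ?_⟩
    calc δ⁻¹ * ε * (δ⁻¹ * ε) ≤ δ * (δ⁻¹ * ε) :=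
          mul_le_mul_left (inv_mul_le_iff_le_mul.2 (not_le.1 hsq).le) _
      _ = ε := mul_inv_cancel_left δ ε

variable (harch : ∀ a b : G, 1 < a → ∃ n : ℕ, b < a ^ n)
include harch

theorem exists_eq_zpow_of_isLeast {m : G} (hm : IsLeast {x | 1 < x} m) (a : G) :
    ∃ k : ℤ, a = m ^ k := by
  have hnonneg : ∀ a : G, 1 ≤ a → ∃ k : ℕ, a = m ^ k := fun a ha => by
    obtain ⟨k, hk, hk'⟩ := exists_pow_le_lt_pow_succ ha (harch m a hm.1)
    have hlow : 1 ≤ (m ^ k)⁻¹ * a := by simpa using hk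
    have hup : (m ^ k)⁻¹ * a < m := inv_mul_lt_iff_lt_mul.2 (by rwa [← pow_succ])
    have hone : (m ^ k)⁻¹ * a = 1 :=
      (hlow.eq_or_lt.resolve_right fun h => (hm.2 h).not_gt hup).symm
    exact ⟨k, (inv_mul_eq_one.1 hone).symm⟩
  rcases le_total 1 a with ha | ha
  · obtain ⟨k, rfl⟩ := hnonneg a ha
    exact ⟨k, (zpow_natCast m k).symm⟩
  · obtain ⟨k, hk⟩ := hnonneg a⁻¹ (Left.one_le_inv_iff.2 ha)
    exact ⟨-k, by rw [zpow_neg, zpow_natCast, ← hk, inv_inv]⟩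

variable [MulRightMono G]

theorem mul_le_swap_of_dense (hdense : ∀ ε : G, 1 < ε → ∃ δ, 1 < δ ∧ δ < ε) {a b : G}
    (ha : 1 < a) (hb : 1 < b) : a * b ≤ b * a := by
  by_contra! hlt
  obtain ⟨δ₀, hδ₀, hδ₀ε⟩ := hdense _ (lt_inv_mul_iff_mul_lt.2 (by rwa [mul_one]))
  obtain ⟨δ, hδ, hδε⟩ := exists_mul_self_le hδ₀ hδ₀ε
  obtain ⟨k, hk, hk'⟩ := exists_pow_le_lt_pow_succ ha.le (harch δ a hδ)
  obtain ⟨l, hl, hl'⟩ := exists_pow_le_lt_pow_succ hb.le (harch δ b hδ)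
  have hab : a * b < b * a * (δ * δ) := calc
    a * b < δ ^ (k + 1) * δ ^ (l + 1) := mul_lt_mul_of_lt_of_lt hk' hl'
    _ = δ ^ l * δ ^ k * (δ * δ) := by
      rw [← sq, ← pow_add, ← pow_add, ← pow_add]; congr 1; omega
    _ ≤ b * a * (δ * δ) := mul_le_mul_left (mul_le_mul' hl hk) _
  exact (inv_mul_lt_iff_lt_mul.2 hab).not_ge hδε

theorem commute_of_archimedean (a b : G) : Commute a b := by
  refine commute_of_forall_one_lt (fun a b ha hb => ?_) a b
  by_cases hmin : ∃ m, IsLeast {x : G | 1 < x} m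
  · obtain ⟨m, hm⟩ := hmin
    obtain ⟨k, rfl⟩ := exists_eq_zpow_of_isLeast harch hm a
    obtain ⟨l, rfl⟩ := exists_eq_zpow_of_isLeast harch hm b
    exact Commute.zpow_zpow_self m k l
  · have hdense : ∀ ε : G, 1 < ε → ∃ δ, 1 < δ ∧ δ < ε := fun ε hε => by
      by_contra! h
      exact hmin ⟨ε, hε, fun x hx => h x hx⟩
    exact le_antisymm (mul_le_swap_of_dense harch hdense ha hb)
      (mul_le_swap_of_dense harch hdense hb ha)

end Holder

section ConvexSubgroup

variable {G : Type*} [Group G] [LinearOrder G]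

namespace Subgroup

theorem lt_of_mem_of_notMem {K : Subgroup G} (hK : (K : Set G).OrdConnected) {x a : G}
    (hx : x ∈ K) (ha : 1 < a) (haK : a ∉ K) : x < a := by
  by_contra! hax
  exact haK (hK.out K.one_mem hx ⟨ha.le, hax⟩)

variable [MulLeftMono G]

theorem exists_one_lt_mem_notMem {K L : Subgroup G} {x : G} (hxK : x ∈ K) (hxL : x ∉ L) :
    ∃ y, 1 < y ∧ y ∈ K ∧ y ∉ L := by
  rcases one_lt_or_eq_one_or_one_lt_inv x with hx | rfl | hx
  · exact ⟨x, hx, hxK, hxL⟩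
  · exact absurd L.one_mem hxL
  · exact ⟨x⁻¹, hx, inv_mem hxK, by rwa [inv_mem_iff]⟩

theorem le_total_of_ordConnected {K L : Subgroup G} (hK : (K : Set G).OrdConnected)
    (hL : (L : Set G).OrdConnected) : K ≤ L ∨ L ≤ K := by
  by_contra! h
  obtain ⟨x, hxK, hxL⟩ := SetLike.not_le_iff_exists.1 h.1
  obtain ⟨y, hyL, hyK⟩ := SetLike.not_le_iff_exists.1 h.2
  obtain ⟨x, hx, hxK, hxL⟩ := exists_one_lt_mem_notMem hxK hxL
  obtain ⟨y, hy, hyL, hyK⟩ := exists_one_lt_mem_notMem hyL hyK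
  exact (lt_of_mem_of_notMem hK hxK hy hyK).not_gt (lt_of_mem_of_notMem hL hyL hx hxL)

theorem mem_of_le_of_inv_le {K : Subgroup G} (hK : (K : Set G).OrdConnected) {f x : G}
    (hf : f ∈ K) (hx : x ≤ f) (hx' : x⁻¹ ≤ f) : x ∈ K := by
  rcases le_total 1 x with h | h
  · exact hK.out K.one_mem hf ⟨h, hx⟩
  · exact inv_mem_iff.1 (hK.out K.one_mem hf ⟨Left.one_le_inv_iff.2 h, hx'⟩)

def convexAvoiding (f : G) (hf : f ≠ 1) : Subgroup G where
  carrier := {x | ∃ K : Subgroup G, (K : Set G).OrdConnected ∧ f ∉ K ∧ x ∈ K}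
  one_mem' := ⟨⊥, by simpa using ordConnected_singleton, by simpa using hf, one_mem _⟩
  mul_mem' := by
    rintro x y ⟨K, hK, hfK, hxK⟩ ⟨L, hL, hfL, hyL⟩
    rcases le_total_of_ordConnected hK hL with hKL | hLK
    · exact ⟨L, hL, hfL, mul_mem (hKL hxK) hyL⟩
    · exact ⟨K, hK, hfK, mul_mem hxK (hLK hyL)⟩
  inv_mem' := by
    rintro x ⟨K, hK, hfK, hxK⟩
    exact ⟨K, hK, hfK, inv_mem hxK⟩

variable {f : G} (hf : f ≠ 1)

theorem ordConnected_convexAvoiding : (convexAvoiding f hf : Set G).OrdConnected := by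
  refine ⟨?_⟩
  rintro x ⟨K, hK, hfK, hxK⟩ y ⟨L, hL, hfL, hyL⟩ z hz
  rcases le_total_of_ordConnected hK hL with hKL | hLK
  · exact ⟨L, hL, hfL, hL.out (hKL hxK) hyL hz⟩
  · exact ⟨K, hK, hfK, hK.out hxK (hLK hyL) hz⟩

theorem notMem_convexAvoiding : f ∉ convexAvoiding f hf := fun ⟨_, _, hfK, hfK'⟩ => hfK hfK'

theorem le_convexAvoiding {K : Subgroup G} (hK : (K : Set G).OrdConnected) (hfK : f ∉ K) :
    K ≤ convexAvoiding f hf := fun _ hx => ⟨K, hK, hfK, hx⟩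

end Subgroup

variable [MulLeftMono G]

theorem exists_one_lt_forall_ordConnected_eq_top [Group.FG G] [Nontrivial G] :
    ∃ f : G, 1 < f ∧ ∀ K : Subgroup G, (K : Set G).OrdConnected → f ∈ K → K = ⊤ := by
  classical
  obtain ⟨S, hS⟩ := Group.fg_def.1 ‹_›
  obtain ⟨g, hg⟩ := exists_ne (1 : G)
  obtain ⟨f, hf⟩ := (insert g S ∪ (insert g S).image (·⁻¹)).exists_le
  have hbound : ∀ s ∈ insert g S, s ≤ f ∧ s⁻¹ ≤ f := fun s hs =>
    ⟨hf s (Finset.mem_union_left _ hs),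
      hf _ (Finset.mem_union_right _ (Finset.mem_image_of_mem _ hs))⟩
  obtain ⟨hgf, hgf'⟩ := hbound g (Finset.mem_insert_self g S)
  refine ⟨f, ?_, fun K hK hfK => ?_⟩
  · rcases one_lt_or_eq_one_or_one_lt_inv g with h | h | h
    · exact h.trans_le hgf
    · exact absurd h hg
    · exact h.trans_le hgf'
  rw [eq_top_iff, ← hS, Subgroup.closure_le]
  intro s hs
  obtain ⟨hsf, hsf'⟩ := hbound s (Finset.mem_insert_of_mem hs)
  exact Subgroup.mem_of_le_of_inv_le hK hfK hsf hsf'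

theorem exists_one_lt_notMem_ge {C : Subgroup G} (hCconv : (C : Set G).OrdConnected)
    (hCtop : C ≠ ⊤) (s : G) : ∃ a, 1 < a ∧ a ∉ C ∧ s ≤ a ∧ s⁻¹ ≤ a := by
  obtain ⟨g, -, hgC⟩ := SetLike.not_le_iff_exists.1 (mt top_le_iff.1 hCtop)
  obtain ⟨g, hg, -, hgC⟩ := Subgroup.exists_one_lt_mem_notMem (Subgroup.mem_top g) hgC
  refine ⟨max (max s s⁻¹) g, hg.trans_le (le_max_right _ _), fun h => ?_,
    (le_max_left _ _).trans (le_max_left _ _), (le_max_right _ _).trans (le_max_left _ _)⟩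
  exact (Subgroup.lt_of_mem_of_notMem hCconv h hg hgC).not_ge (le_max_right _ _)

end ConvexSubgroup

section QuotientCone

variable {G : Type*} [Group G] [LinearOrder G] [MulLeftMono G] {C : Subgroup G}

def Subgroup.quotientCone (C : Subgroup G) : Set (G ⧸ C) :=
  QuotientGroup.mk '' {a | 1 < a ∧ a ∉ C}

variable (hCconv : (C : Set G).OrdConnected)
include hCconv

theorem isPositiveCone_quotientCone [C.Normal] : IsPositiveCone_s16 C.quotientCone where
  one_notMem := by
    rintro ⟨a, ⟨-, haC⟩, ha⟩
    exact haC ((QuotientGroup.eq_one_iff a).1 ha)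
  mul_mem := by
    rintro _ _ ⟨a, ⟨ha, haC⟩, rfl⟩ ⟨b, ⟨hb, -⟩, rfl⟩
    have hab : a < a * b := lt_mul_of_one_lt_right' a hb
    exact ⟨a * b, ⟨ha.trans hab, fun h => haC (hCconv.out C.one_mem h ⟨ha.le, hab.le⟩)⟩, rfl⟩
  mem_or_inv_mem := by
    intro q hq
    obtain ⟨a, rfl⟩ := QuotientGroup.mk_surjective q
    have haC : a ∉ C := fun h => hq ((QuotientGroup.eq_one_iff a).2 h)
    rcases one_lt_or_eq_one_or_one_lt_inv a with ha | rfl | ha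
    · exact Or.inl ⟨a, ⟨ha, haC⟩, rfl⟩
    · exact absurd C.one_mem haC
    · exact Or.inr ⟨a⁻¹, ⟨ha, by rwa [inv_mem_iff]⟩, rfl⟩

theorem exists_inv_mul_pow_mem_quotientCone [C.Normal]
    (hdom : ∀ w, 1 < w → w ∉ C → ∀ x, ∃ n : ℕ, x < w ^ n) {q : G ⧸ C}
    (hq : q ∈ C.quotientCone) (q' : G ⧸ C) : ∃ n : ℕ, q'⁻¹ * q ^ n ∈ C.quotientCone := by
  obtain ⟨a, ⟨ha, haC⟩, rfl⟩ := hq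
  obtain ⟨b, rfl⟩ := QuotientGroup.mk_surjective q'
  obtain ⟨n, hn⟩ := hdom a ha haC (b * a)
  have hlt : a < b⁻¹ * a ^ n := lt_inv_mul_iff_mul_lt.2 hn
  exact ⟨n, b⁻¹ * a ^ n, ⟨ha.trans hlt, fun h => haC (hCconv.out C.one_mem h ⟨ha.le, hlt.le⟩)⟩,
    rfl⟩

end QuotientCone

def IsConradian (G : Type*) [Group G] [LT G] : Prop :=
  ∀ a b : G, 1 < a → 1 < b → ∃ n : ℕ, 0 < n ∧ a < b * a ^ n

namespace IsConradian

variable {G : Type*} [Group G] [LinearOrder G] [MulLeftMono G] (hC : IsConradian G)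
include hC

theorem lt_mul_sq {a b : G} (ha : 1 < a) (hb : 1 < b) : a < b * a ^ 2 := by
  by_contra! hle
  set x := b * a
  have hxa : x * a ≤ a := by simpa [x, sq, mul_assoc] using hle
  have hpow : ∀ k : ℕ, x ^ k * a ≤ a := by
    intro k
    induction k with
    | zero => simp
    | succ k ih => calc
        x ^ (k + 1) * a = x * (x ^ k * a) := by rw [pow_succ', mul_assoc]
        _ ≤ x * a := mul_le_mul_right ih x
        _ ≤ a := hxa
  obtain ⟨n, -, hn⟩ := hC x b (Left.one_lt_mul' hb ha) hb
  have hax : a < x ^ n := lt_of_mul_lt_mul_left' hn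
  exact ((lt_mul_of_one_lt_right' _ ha).trans_le (hpow n)).not_gt hax

theorem mul_lt_sq {k a : G} (hk : k ≤ 1) (ha : 1 < a) : k * a < a ^ 2 := by
  rcases hk.lt_or_eq with hk | rfl
  · exact lt_inv_mul_iff_mul_lt.1 (hC.lt_mul_sq ha (Left.one_lt_inv_iff.2 hk))
  · simpa [sq] using lt_mul_of_one_lt_right' a ha

theorem mul_lt_pow_three {a x y : G} (ha : 1 < a) (hx : x ≤ a) (hy : y ≤ a) : x * y < a ^ 3 :=
  calc x * y ≤ x * a := mul_le_mul_right hy x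
    _ = a * (a⁻¹ * x * a) := by group
    _ < a * a ^ 2 := mul_lt_mul_right (hC.mul_lt_sq (inv_mul_le_one_iff.2 hx) ha) a
    _ = a ^ 3 := by rw [← pow_succ']

theorem conj_lt_pow_nine {a s x : G} (ha : 1 < a) (hs : s ≤ a) (hs' : s⁻¹ ≤ a) (hx : x ≤ a) :
    s * x * s⁻¹ < a ^ 9 := by
  have ha3 : a ≤ a ^ 3 := by simpa using pow_le_pow_right' ha.le (show 1 ≤ 3 by norm_num)
  have := hC.mul_lt_pow_three (one_lt_pow' ha (by norm_num)) (hC.mul_lt_pow_three ha hs hx).le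
    (hs'.trans ha3)
  rwa [← pow_mul] at this

def powerHull {a : G} (ha : 1 < a) : Subgroup G where
  carrier := {x | ∃ n : ℕ, x ≤ a ^ n ∧ x⁻¹ ≤ a ^ n}
  one_mem' := ⟨0, by simp⟩
  inv_mem' := by
    rintro x ⟨n, hx, hx'⟩
    exact ⟨n, by simpa using hx', by simpa using hx⟩
  mul_mem' := by
    rintro x y ⟨n, hx, hx'⟩ ⟨m, hy, hy'⟩
    have hN : 1 < a ^ (n + m + 1) := one_lt_pow' ha (by omega)
    have hle : ∀ {k}, k ≤ n + m + 1 → a ^ k ≤ a ^ (n + m + 1) := pow_le_pow_right' ha.le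
    refine ⟨(n + m + 1) * 3, ?_, ?_⟩ <;> rw [pow_mul]
    · exact (hC.mul_lt_pow_three hN (hx.trans (hle (by omega))) (hy.trans (hle (by omega)))).le
    · rw [mul_inv_rev]
      exact (hC.mul_lt_pow_three hN (hy'.trans (hle (by omega))) (hx'.trans (hle (by omega)))).le

theorem ordConnected_powerHull {a : G} (ha : 1 < a) : (hC.powerHull ha : Set G).OrdConnected := by
  refine ⟨?_⟩
  rintro x ⟨n, -, hx'⟩ y ⟨m, hy, -⟩ z ⟨hxz, hzy⟩
  have hN : 1 < a ^ (n + m + 1) := one_lt_pow' ha (by omega)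
  have hle : ∀ {k}, k ≤ n + m + 1 → a ^ k ≤ a ^ (n + m + 1) := pow_le_pow_right' ha.le
  have hzN : z ≤ a ^ (n + m + 1) := hzy.trans (hy.trans (hle (by omega)))
  refine ⟨(n + m + 1) * 3, ?_, ?_⟩ <;> rw [pow_mul]
  · exact hzN.trans (by simpa using pow_le_pow_right' hN.le (show 1 ≤ 3 by norm_num))
  · have hzx : z⁻¹ * x ≤ a ^ (n + m + 1) := (inv_mul_le_one_iff.2 hxz).trans hN.le
    simpa using (hC.mul_lt_pow_three hN hzx (hx'.trans (hle (by omega)))).le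

theorem mem_powerHull_self {a : G} (ha : 1 < a) : a ∈ hC.powerHull ha :=
  ⟨1, by simp, by simpa using ((Left.inv_lt_one_iff.2 ha).trans ha).le⟩

theorem exists_lt_pow_of_notMem_convexAvoiding {f : G} (hf : 1 < f)
    (htop : ∀ K : Subgroup G, (K : Set G).OrdConnected → f ∈ K → K = ⊤) {w : G} (hw : 1 < w)
    (hwC : w ∉ Subgroup.convexAvoiding f hf.ne') (x : G) : ∃ n : ℕ, x < w ^ n := by
  have hfw : f ∈ hC.powerHull hw := by
    by_contra h
    exact hwC (Subgroup.le_convexAvoiding hf.ne' (hC.ordConnected_powerHull hw) h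
      (hC.mem_powerHull_self hw))
  obtain ⟨n, hn, -⟩ : x ∈ hC.powerHull hw := by
    rw [htop _ (hC.ordConnected_powerHull hw) hfw]
    exact Subgroup.mem_top x
  exact ⟨n + 1, hn.trans_lt (pow_lt_pow_right' hw n.lt_succ_self)⟩

theorem exists_convex_jump [Group.FG G] [Nontrivial G] :
    ∃ C : Subgroup G, (C : Set G).OrdConnected ∧ C ≠ ⊤ ∧
      ∀ w, 1 < w → w ∉ C → ∀ x, ∃ n : ℕ, x < w ^ n := by
  obtain ⟨f, hf, htop⟩ := exists_one_lt_forall_ordConnected_eq_top (G := G)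
  refine ⟨_, Subgroup.ordConnected_convexAvoiding hf.ne', fun h => ?_,
    fun w hw hwC => hC.exists_lt_pow_of_notMem_convexAvoiding hf htop hw hwC⟩
  exact Subgroup.notMem_convexAvoiding hf.ne' (h ▸ Subgroup.mem_top f)

section ConvexJump

variable {C : Subgroup G} (hCconv : (C : Set G).OrdConnected) (hCtop : C ≠ ⊤)
  (hdom : ∀ w, 1 < w → w ∉ C → ∀ x, ∃ n : ℕ, x < w ^ n)
include hCconv hCtop hdom

theorem one_lt_conj {w : G} (hw : 1 < w) (hwC : w ∉ C) (s : G) : 1 < s * w * s⁻¹ := by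
  by_contra! hv
  obtain ⟨a, ha, -, hsa, hsa'⟩ := exists_one_lt_notMem_ge hCconv hCtop s
  obtain ⟨n, hn⟩ := hdom w hw hwC (a ^ 9)
  have hwn : w ^ n = s⁻¹ * (s * w * s⁻¹) ^ n * s⁻¹⁻¹ := by rw [conj_pow]; group
  rw [hwn] at hn
  exact hn.not_gt (hC.conj_lt_pow_nine ha hsa' (by rwa [inv_inv]) ((pow_le_one' hv n).trans ha.le))

theorem normal_of_convex_jump : C.Normal := by
  have key : ∀ c ∈ C, ∀ s : G, 1 < s * c * s⁻¹ → s * c * s⁻¹ ∈ C := by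
    intro c hc s hpos
    by_contra hw
    obtain ⟨a, ha, haC, hsa, hsa'⟩ := exists_one_lt_notMem_ge hCconv hCtop s
    obtain ⟨n, hn⟩ := hdom _ hpos hw (a ^ 9)
    rw [conj_pow] at hn
    exact hn.not_gt (hC.conj_lt_pow_nine ha hsa hsa'
      (Subgroup.lt_of_mem_of_notMem hCconv (pow_mem hc n) ha haC).le)
  refine ⟨fun c hc s => ?_⟩
  rcases one_lt_or_eq_one_or_one_lt_inv (s * c * s⁻¹) with h | h | h
  · exact key c hc s h
  · exact h ▸ C.one_mem
  · have := key c⁻¹ (inv_mem hc) s (by simpa [mul_assoc] using h)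
    simpa [mul_assoc] using inv_mem this

theorem conj_mem_quotientCone [C.Normal] {q : G ⧸ C} (hq : q ∈ C.quotientCone) (s : G ⧸ C) :
    s * q * s⁻¹ ∈ C.quotientCone := by
  obtain ⟨a, ⟨ha, haC⟩, rfl⟩ := hq
  obtain ⟨t, rfl⟩ := QuotientGroup.mk_surjective s
  refine ⟨t * a * t⁻¹, ⟨hC.one_lt_conj hCconv hCtop hdom ha haC t, fun h => haC ?_⟩, rfl⟩
  simpa [mul_assoc] using ‹C.Normal›.conj_mem _ h t⁻¹

end ConvexJump

end IsConradian

theorem CommGroup.exists_surjective_multiplicativeInt {A : Type*} [CommGroup A] [Group.FG A]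
    [IsMulTorsionFree A] [Nontrivial A] : ∃ φ : A →* Multiplicative ℤ, Surjective φ := by
  have : Module.Finite ℤ (Additive A) := Module.Finite.iff_addGroup_fg.2 inferInstance
  let b := Module.Free.chooseBasis ℤ (Additive A)
  obtain ⟨i⟩ := b.index_nonempty
  refine ⟨AddMonoidHom.toMultiplicativeRight (b.coord i).toAddMonoidHom, fun z => ?_⟩
  exact ⟨Additive.toMul (z.toAdd • b i), by simp⟩

theorem IsConradian.exists_surjective_multiplicativeInt {G : Type*} [Group G] [LinearOrder G]
    [MulLeftMono G] [Group.FG G] [Nontrivial G] (hC : IsConradian G) :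
    ∃ φ : G →* Multiplicative ℤ, Surjective φ := by
  obtain ⟨C, hCconv, hCtop, hdom⟩ := hC.exists_convex_jump
  have := hC.normal_of_convex_jump hCconv hCtop hdom
  have hP := isPositiveCone_quotientCone hCconv
  let := hP.linearOrder
  have := hP.mulLeftMono
  have := hP.mulRightMono fun _ hq s => hC.conj_mem_quotientCone hCconv hCtop hdom hq s
  have hcomm : ∀ a b : G ⧸ C, Commute a b := commute_of_archimedean fun a b ha =>
    exists_inv_mul_pow_mem_quotientCone hCconv hdom (hP.one_lt_iff.1 ha) b
  let : CommGroup (G ⧸ C) := { mul_comm := hcomm }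
  have : Nontrivial (G ⧸ C) := QuotientGroup.nontrivial_iff.2 hCtop
  obtain ⟨ψ, hψ⟩ := CommGroup.exists_surjective_multiplicativeInt (A := G ⧸ C)
  exact ⟨ψ.comp (QuotientGroup.mk' C), hψ.comp (QuotientGroup.mk'_surjective C)⟩

theorem IsConradian.locallyIndicable {G : Type*} [Group G] [LinearOrder G] [MulLeftMono G]
    (hC : IsConradian G) : LocallyIndicable G := by
  intro K hK hne
  have : Nontrivial K := (Subgroup.nontrivial_iff_ne_bot K).2 hne
  have : Group.FG K := (Group.fg_iff_subgroup_fg K).2 hK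
  have : MulLeftMono K := ⟨fun a b c h => mul_le_mul_right (show (b : G) ≤ c from h) (a : G)⟩
  exact IsConradian.exists_surjective_multiplicativeInt fun a b ha hb => hC a b ha hb

section ConradClosure

variable {G : Type*} [Group G]

inductive ConradClosure (S : Set G) : G → Prop
  | of_mem {x : G} : x ∈ S → ConradClosure S x
  | mul {a b : G} : ConradClosure S a → ConradClosure S b → ConradClosure S (a * b)
  | conrad {a b : G} : ConradClosure S a → ConradClosure S b → ConradClosure S (a⁻¹ * b * a ^ 2)

theorem ConradClosure.not_empty {x : G} : ¬ ConradClosure ∅ x := fun h => by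
  induction h with
  | of_mem h => exact h
  | mul _ _ ih => exact ih
  | conrad _ _ ih => exact ih

/-- Both operations add the values of `φ`, so an element with value `1` is built from `S` alone. -/
theorem ConradClosure.exists_of_union_pos {K : Subgroup G} {A : Type*} [CommGroup A]
    [PartialOrder A] [IsOrderedMonoid A] (φ : K →* A) {S : Set G} (hS : S ⊆ K.subtype '' φ.ker)
    {x : G} (hx : ConradClosure (S ∪ K.subtype '' {k | 1 < φ k}) x) :
    ∃ k : K, ↑k = x ∧ 1 ≤ φ k ∧ (φ k = 1 → ConradClosure S x) := by
  induction hx with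
  | of_mem h =>
    rcases h with h | ⟨k, hk, rfl⟩
    · obtain ⟨k, hk, rfl⟩ := hS h
      exact ⟨k, rfl, (MonoidHom.mem_ker.1 hk).ge, fun _ => .of_mem h⟩
    · exact ⟨k, rfl, hk.le, fun h => absurd h hk.ne'⟩
  | mul _ _ ha hb =>
    obtain ⟨k, rfl, hk, hk'⟩ := ha
    obtain ⟨l, rfl, hl, hl'⟩ := hb
    refine ⟨k * l, rfl, by rw [map_mul]; exact one_le_mul hk hl, fun h => .mul (hk' ?_) (hl' ?_)⟩
    · rw [map_mul] at h; exact ((mul_eq_one_iff_of_one_le hk hl).1 h).1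
    · rw [map_mul] at h; exact ((mul_eq_one_iff_of_one_le hk hl).1 h).2
  | conrad _ _ ha hb =>
    obtain ⟨k, rfl, hk, hk'⟩ := ha
    obtain ⟨l, rfl, hl, hl'⟩ := hb
    have hφ : φ (k⁻¹ * l * k ^ 2) = φ k * φ l := by
      rw [map_mul, map_mul, map_inv, map_pow, sq, mul_comm (φ k)⁻¹, mul_assoc,
        inv_mul_cancel_left, mul_comm]
    refine ⟨k⁻¹ * l * k ^ 2, rfl, by rw [hφ]; exact one_le_mul hk hl,
      fun h => .conrad (hk' ?_) (hl' ?_)⟩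
    · rw [hφ] at h; exact ((mul_eq_one_iff_of_one_le hk hl).1 h).1
    · rw [hφ] at h; exact ((mul_eq_one_iff_of_one_le hk hl).1 h).2

theorem Subgroup.exists_mem_notMem_map_ker {s : Set G} {M : Type*} [Group M]
    {φ : closure s →* M} (hφ : φ ≠ 1) : ∃ g ∈ s, g ∉ φ.ker.map (closure s).subtype := by
  by_contra! h
  refine hφ (MonoidHom.ext fun k => ?_)
  have hk : (closure s).subtype k ∈ φ.ker.map (closure s).subtype := (closure_le _).2 h k.2
  rwa [mem_map_iff_mem (closure s).subtype_injective, MonoidHom.mem_ker] at hk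

namespace LocallyIndicable

variable (hG : LocallyIndicable G)
include hG

theorem exists_selection (F : Finset G) :
    ∃ S : Set G, S ⊆ Subgroup.closure (F : Set G) ∧ (∀ g ∈ F, g ≠ 1 → g ∈ S ∨ g⁻¹ ∈ S) ∧
      ¬ ConradClosure S 1 := by
  classical
  induction F using Finset.strongInduction with
  | H F ih =>
  set K := Subgroup.closure (F : Set G)
  by_cases hK : K = ⊥
  · refine ⟨∅, empty_subset _, fun g hg hg1 => ?_, ConradClosure.not_empty⟩
    have : g ∈ K := Subgroup.subset_closure hg
    exact absurd (by simpa [hK] using this) hg1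
  obtain ⟨φ, hφ⟩ := hG K ⟨F, rfl⟩ hK
  have hφ1 : φ ≠ 1 := fun h => by
    obtain ⟨k, hk⟩ := hφ (Multiplicative.ofAdd 1)
    rw [h, MonoidHom.one_apply] at hk
    exact absurd hk (by decide)
  set F₀ := F.filter (· ∈ φ.ker.map K.subtype)
  have hF₀ : F₀ ⊂ F := Finset.filter_ssubset.2 (Subgroup.exists_mem_notMem_map_ker hφ1)
  obtain ⟨S₀, hS₀F₀, hS₀sel, hS₀⟩ := ih F₀ hF₀
  have hS₀ker : S₀ ⊆ K.subtype '' φ.ker :=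
    hS₀F₀.trans ((Subgroup.closure_le _).2 fun g hg => (Finset.mem_filter.1 hg).2)
  refine ⟨S₀ ∪ K.subtype '' {k | 1 < φ k}, union_subset ?_ ?_, fun g hg hg1 => ?_, fun h => ?_⟩
  · exact hS₀F₀.trans (Subgroup.closure_mono (Finset.filter_subset _ F))
  · rintro _ ⟨k, -, rfl⟩
    exact k.2
  · by_cases hg₀ : g ∈ F₀
    · exact (hS₀sel g hg₀ hg1).imp Or.inl Or.inl
    set k : K := ⟨g, Subgroup.subset_closure hg⟩
    have hφk : φ k ≠ 1 := fun h => hg₀ (Finset.mem_filter.2 ⟨hg, k, h, rfl⟩)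
    rcases hφk.lt_or_gt with h | h
    · exact Or.inr (Or.inr ⟨k⁻¹, by simpa using h, rfl⟩)
    · exact Or.inl (Or.inr ⟨k, h, rfl⟩)
  · obtain ⟨k, hk1, -, hk⟩ := ConradClosure.exists_of_union_pos φ hS₀ker h
    obtain rfl : k = 1 := Subtype.ext hk1
    exact hS₀ (hk (map_one φ))

theorem exists_isPositiveCone :
    ∃ P : Set G, IsPositiveCone_s16 P ∧ ∀ a ∈ P, ∀ b ∈ P, a⁻¹ * b * a ^ 2 ∈ P := by
  choose S _ hsel hS using hG.exists_selection
  let U : Ultrafilter (Finset G) := .of Filter.atTop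
  have hU : ∀ F₀ : Finset G, ∀ᶠ F in U, F₀ ⊆ F := fun F₀ =>
    Ultrafilter.of_le Filter.atTop (Filter.eventually_ge_atTop F₀)
  refine ⟨{g | ∀ᶠ F in U, ConradClosure (S F) g}, ⟨fun h => ?_, fun ha hb => ?_, fun {g} hg => ?_⟩,
    fun a ha b hb => ?_⟩
  · obtain ⟨F, hF⟩ := h.exists
    exact hS F hF
  · exact (ha.and hb).mono fun F h => h.1.mul h.2
  · refine Ultrafilter.eventually_or.1 ((hU {g}).mono fun F hF => ?_)
    exact (hsel F g (hF (Finset.mem_singleton_self g)) hg).imp .of_mem .of_mem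
  · exact (ha.and hb).mono fun F h => h.1.conrad h.2

end LocallyIndicable

end ConradClosure

/-- Brodskii; Rhemtulla–Rolfsen; Navas: a group admits a
Conradian left-ordering iff it is locally indicable.  A Conradian left-ordering
is a left-invariant strict linear order such that for all `g, h` with
`1 < g`, `1 < h` there is `n ≥ 1` with `g < h * gⁿ`. -/
theorem conradian_leftOrderable_iff_locallyIndicable {G : Type*} [Group G] :
    (∃ r : G → G → Prop, IsStrictTotalOrder G r ∧
        (∀ f g h : G, r g h → r (f * g) (f * h)) ∧
        (∀ g h : G, r 1 g → r 1 h → ∃ n : ℕ, 0 < n ∧ r g (h * g ^ n))) ↔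
      LocallyIndicable G := by
  constructor
  · rintro ⟨r, hr, hleft, hconrad⟩
    let : LinearOrder G := @linearOrderOfSTO G r hr (Classical.decRel r)
    have : MulLeftStrictMono G := ⟨fun f _ _ h => hleft f _ _ h⟩
    have : MulLeftMono G := mulLeftMono_of_mulLeftStrictMono G
    exact IsConradian.locallyIndicable hconrad
  · intro hG
    obtain ⟨P, hP, hPconrad⟩ := hG.exists_isPositiveCone
    refine ⟨fun a b => a⁻¹ * b ∈ P, hP.isStrictTotalOrder, fun f a b h => ?_,
      fun a b ha hb => ⟨2, two_pos, ?_⟩⟩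
    · simpa [mul_assoc] using h
    · simp only [inv_one, one_mul] at ha hb
      simpa [mul_assoc] using hPconrad a ha b hb
end
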